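/- Let m >= 1 and fix i in {1,...,m}. For a positive integer q, let M(q) be the set of tuples (x_1,...,x_m) in Z_q^m such that: 2x_i = 1; 2x_s != 0 and 2x_s != 1 for all s != i; x_s != x_t for all s != t; x_s != x_t + 1 for all s < t; and x_s != -x_t and x_s != -x_t + 1 for all s != t. Then there exists a positive integer N such that, writing T = q - 2m, for every odd integer q >= N one has |M(q)| = T^(i-1) * (T+1)^(m-i), and for every even integer q >= N one has |M(q)| = 0. -/

import Mathlib

/-- Sorting key for a "data" function: gap index, then within a gap
`+` stones (sign `true`) by increasing index, then `-` stones by decreasing index. -/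
def shiKey (m : ℕ) (w : Fin m → ℕ × Bool) (s : Fin m) : ℕ :=
  (w s).1 * (2 * m) + (if (w s).2 then (s : ℕ) else 2 * m - 1 - (s : ℕ))

/-- Rank of a stone in the key order. -/
def shiRk (m : ℕ) (w : Fin m → ℕ × Bool) (s : Fin m) : ℕ :=
  (Finset.univ.filter (fun t => shiKey m w t < shiKey m w s)).card

/-- From data (gap, sign) to word (position, sign). -/
def shiToW (m : ℕ) (d : Fin m → ℕ × Bool) : Fin m → ℕ × Bool :=
  fun s => ((d s).1 + shiRk m d s + 1, (d s).2)

/-- From word (position, sign) to data (gap, sign). -/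
def shiToD (m : ℕ) (w : Fin m → ℕ × Bool) : Fin m → ℕ × Bool :=
  fun s => ((w s).1 - 1 - (Finset.univ.filter (fun t => (w t).1 < (w s).1)).card, (w s).2)

/-- Word conditions. -/
def IsW (m B : ℕ) (i0 : Fin m) (w : Fin m → ℕ × Bool) : Prop :=
  (∀ s, 1 ≤ (w s).1 ∧ (w s).1 ≤ B + m) ∧
  (∀ s t, (w s).1 = (w t).1 → s = t) ∧
  ((w i0).1 = B + m ∧ (w i0).2 = false) ∧
  ∀ s t, (w t).1 = (w s).1 + 1 →
    (¬((w s).2 = false ∧ (w t).2 = true)) ∧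
    ((w s).2 = true → (w t).2 = true → (s : ℕ) < t) ∧
    ((w s).2 = false → (w t).2 = false → (t : ℕ) < s)

/-- Data conditions. -/
def IsD (m B : ℕ) (i0 : Fin m) (d : Fin m → ℕ × Bool) : Prop :=
  (∀ s, (d s).1 ≤ B) ∧ d i0 = (B, false) ∧ ∀ s : Fin m, (s : ℕ) < i0 → d s ≠ (B, false)

section Core
variable {m B : ℕ} {i0 : Fin m}

lemma offset_lt (w : Fin m → ℕ × Bool) (s : Fin m) :
    (if (w s).2 then (s : ℕ) else 2 * m - 1 - (s : ℕ)) < 2 * m := by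
  have := s.isLt; split <;> omega

lemma key_inj (w : Fin m → ℕ × Bool) {s t : Fin m}
    (h : shiKey m w s = shiKey m w t) : (w s).1 = (w t).1 ∧ s = t := by
  have hs := offset_lt w s
  have ht := offset_lt w t
  unfold shiKey at h
  have hm : 0 < 2 * m := by have := s.isLt; omega
  have hdiv : (w s).1 = (w t).1 := by
    have h1 : ((w s).1 * (2 * m) + (if (w s).2 then (s : ℕ) else 2 * m - 1 - (s : ℕ))) / (2 * m)
        = (w s).1 := by
      rw [mul_comm ((w s).1) (2 * m), Nat.mul_add_div hm, Nat.div_eq_of_lt hs]; omega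
    have h2 : ((w t).1 * (2 * m) + (if (w t).2 then (t : ℕ) else 2 * m - 1 - (t : ℕ))) / (2 * m)
        = (w t).1 := by
      rw [mul_comm ((w t).1) (2 * m), Nat.mul_add_div hm, Nat.div_eq_of_lt ht]; omega
    rw [← h1, ← h2, h]
  refine ⟨hdiv, ?_⟩
  rw [hdiv] at h
  have hoff : (if (w s).2 then (s : ℕ) else 2 * m - 1 - (s : ℕ))
      = (if (w t).2 then (t : ℕ) else 2 * m - 1 - (t : ℕ)) := by omega
  have hs' := s.isLt; have ht' := t.isLt
  apply Fin.ext
  rcases hb1 : (w s).2 <;> rcases hb2 : (w t).2 <;> simp [hb1, hb2] at hoff <;> omega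

lemma key_lex_gap {w : Fin m → ℕ × Bool} {s t : Fin m}
    (h : shiKey m w t < shiKey m w s) : (w t).1 ≤ (w s).1 := by
  by_contra hc
  push_neg at hc
  have hs := offset_lt w s
  have : shiKey m w s < shiKey m w t := by
    unfold shiKey
    calc (w s).1 * (2 * m) + _ < (w s).1 * (2 * m) + 2 * m := by omega
    _ = ((w s).1 + 1) * (2 * m) := by ring
    _ ≤ (w t).1 * (2 * m) := Nat.mul_le_mul_right _ (by omega)
    _ ≤ _ := Nat.le_add_right _ _
  omega

lemma rk_lt {w : Fin m → ℕ × Bool} {s t : Fin m}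
    (h : shiKey m w t < shiKey m w s) : shiRk m w t < shiRk m w s := by
  apply Finset.card_lt_card
  constructor
  · intro u hu
    simp only [Finset.mem_filter, Finset.mem_univ, true_and] at hu ⊢
    omega
  · intro hsub
    have ht : t ∈ Finset.univ.filter (fun u => shiKey m w u < shiKey m w s) := by
      simp only [Finset.mem_filter, Finset.mem_univ, true_and]; exact h
    have := hsub ht
    simp only [Finset.mem_filter, Finset.mem_univ, true_and] at this
    omega

lemma pos_mono {w : Fin m → ℕ × Bool} {s t : Fin m}
    (h : shiKey m w t < shiKey m w s) : (shiToW m w t).1 < (shiToW m w s).1 := by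
  have h1 := key_lex_gap h
  have h2 := rk_lt h
  simp only [shiToW]
  omega

lemma pos_lt_iff_key_lt (w : Fin m → ℕ × Bool) (s t : Fin m) :
    (shiToW m w t).1 < (shiToW m w s).1 ↔ shiKey m w t < shiKey m w s := by
  constructor
  · intro h
    rcases lt_trichotomy (shiKey m w t) (shiKey m w s) with h1 | h1 | h1
    · exact h1
    · exact absurd ((key_inj w h1).2 ▸ h) (lt_irrefl _)
    · exact absurd (pos_mono h1) (by omega)
  · exact pos_mono

lemma rk_le (w : Fin m → ℕ × Bool) (s : Fin m) : shiRk m w s ≤ m - 1 := by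
  unfold shiRk
  calc (Finset.univ.filter (fun t => shiKey m w t < shiKey m w s)).card
      ≤ (Finset.univ.erase s).card := by
        apply Finset.card_le_card
        intro u hu
        simp only [Finset.mem_filter, Finset.mem_univ, true_and] at hu
        simp only [Finset.mem_erase, Finset.mem_univ, and_true]
        rintro rfl; omega
    _ = m - 1 := by rw [Finset.card_erase_of_mem (Finset.mem_univ _)]; simp

end Core

section Dside
variable {m B : ℕ} {i0 : Fin m}

lemma key_i0_max (d : Fin m → ℕ × Bool) (hd : IsD m B i0 d) {t : Fin m} (ht : t ≠ i0) :
    shiKey m d t < shiKey m d i0 := by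
  have h6 := hd.1 t
  obtain ⟨hle, hi0, hlt⟩ := hd
  have hti := t.isLt
  have hii := i0.isLt
  have hoff := offset_lt d t
  unfold shiKey
  rw [hi0]
  simp only
  rcases Nat.lt_or_ge (d t).1 B with h | h
  · calc (d t).1 * (2 * m) + _ < (d t).1 * (2 * m) + 2 * m := by omega
      _ = ((d t).1 + 1) * (2 * m) := by ring
      _ ≤ B * (2 * m) := Nat.mul_le_mul_right _ (by omega)
      _ ≤ _ := Nat.le_add_right _ _
  · have hB : (d t).1 = B := by omega
    rw [hB]
    apply Nat.add_lt_add_left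
    have hne : (t : ℕ) ≠ (i0 : ℕ) := fun hc => ht (Fin.ext hc)
    rcases hb : (d t).2
    · have h4 : ¬ ((t : ℕ) < i0) := fun hc => hlt t hc (Prod.ext hB hb)
      simp [hb]
      omega
    · simp [hb]
      omega

lemma rk_i0 (d : Fin m → ℕ × Bool) (hd : IsD m B i0 d) : shiRk m d i0 = m - 1 := by
  unfold shiRk
  have : Finset.univ.filter (fun t => shiKey m d t < shiKey m d i0) = Finset.univ.erase i0 := by
    ext t
    simp only [Finset.mem_filter, Finset.mem_univ, true_and, Finset.mem_erase, and_true]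
    constructor
    · rintro h rfl; omega
    · exact fun h => key_i0_max d hd h
  rw [this, Finset.card_erase_of_mem (Finset.mem_univ _)]
  simp

lemma toW_isW (d : Fin m → ℕ × Bool) (hd : IsD m B i0 d) : IsW m B i0 (shiToW m d) := by
  have hm : 0 < m := by have := i0.isLt; omega
  obtain ⟨hle, hi0, hlt⟩ := hd
  refine ⟨?_, ?_, ?_, ?_⟩
  · intro s
    have h1 := rk_le d s
    have h2 := hle s
    simp only [shiToW]
    omega
  · intro s t h
    rcases lt_trichotomy (shiKey m d s) (shiKey m d t) with h1 | h1 | h1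
    · exact absurd (pos_mono h1) (by omega)
    · exact (key_inj d h1).2
    · exact absurd (pos_mono h1) (by omega)
  · constructor
    · simp only [shiToW, rk_i0 d ⟨hle, hi0, hlt⟩, hi0]
      omega
    · simp [shiToW, hi0]
  · intro s t h
    simp only [shiToW] at h
    have hkey : shiKey m d s < shiKey m d t := by
      rcases lt_trichotomy (shiKey m d s) (shiKey m d t) with h1 | h1 | h1
      · exact h1
      · have := (key_inj d h1).2; subst this; omega
      · have := pos_mono h1; simp only [shiToW] at this; omega
    have hg : (d s).1 ≤ (d t).1 := key_lex_gap hkey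
    have hr : shiRk m d s < shiRk m d t := rk_lt hkey
    have hgeq : (d s).1 = (d t).1 := by omega
    -- same gap: compare offsets
    have hoffs : (if (d s).2 then (s : ℕ) else 2 * m - 1 - (s : ℕ))
        < (if (d t).2 then (t : ℕ) else 2 * m - 1 - (t : ℕ)) := by
      unfold shiKey at hkey
      rw [hgeq] at hkey
      omega
    have hs' := s.isLt; have ht' := t.isLt
    refine ⟨?_, ?_, ?_⟩
    · rintro ⟨h1, h2⟩
      simp only [shiToW] at h1 h2
      rw [h1, h2] at hoffs
      norm_num at hoffs
      omega
    · intro h1 h2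
      simp only [shiToW] at h1 h2
      rw [h1, h2] at hoffs
      norm_num at hoffs
      exact hoffs
    · intro h1 h2
      simp only [shiToW] at h1 h2
      rw [h1, h2] at hoffs
      norm_num at hoffs
      omega

lemma toD_toW (d : Fin m → ℕ × Bool) : shiToD m (shiToW m d) = d := by
  funext s
  simp only [shiToD, shiToW]
  refine Prod.ext ?_ rfl
  simp only
  have hsets : Finset.univ.filter (fun t => (shiToW m d t).1 < (shiToW m d s).1)
      = Finset.univ.filter (fun t => shiKey m d t < shiKey m d s) := by
    ext t
    simp only [Finset.mem_filter, Finset.mem_univ, true_and]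
    exact pos_lt_iff_key_lt d s t
  have : (Finset.univ.filter (fun t => (shiToW m d t).1 < (shiToW m d s).1)).card = shiRk m d s := by
    rw [hsets]; rfl
  simp only [shiToW] at this
  rw [this]
  omega

end Dside

section Wside
variable {m B : ℕ} {i0 : Fin m}

lemma key_lt_of_gap_lt {w : Fin m → ℕ × Bool} {s t : Fin m}
    (h : (w t).1 < (w s).1) : shiKey m w t < shiKey m w s := by
  have ht := offset_lt w t
  unfold shiKey
  calc (w t).1 * (2 * m) + _ < (w t).1 * (2 * m) + 2 * m := by omega
    _ = ((w t).1 + 1) * (2 * m) := by ring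
    _ ≤ (w s).1 * (2 * m) := Nat.mul_le_mul_right _ (by omega)
    _ ≤ _ := Nat.le_add_right _ _

lemma key_lt_of_offset_lt {w : Fin m → ℕ × Bool} {s t : Fin m}
    (h1 : (w t).1 = (w s).1)
    (h2 : (if (w t).2 then (t : ℕ) else 2 * m - 1 - (t : ℕ))
        < (if (w s).2 then (s : ℕ) else 2 * m - 1 - (s : ℕ))) :
    shiKey m w t < shiKey m w s := by
  unfold shiKey
  rw [h1]
  exact Nat.add_lt_add_left h2 _

lemma chain_false (w : Fin m → ℕ × Bool) (hw : IsW m B i0 w) :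
    ∀ k (s t : Fin m), (w t).1 = (w s).1 + k →
      (∀ j, (w s).1 ≤ j → j ≤ (w t).1 → ∃ u, (w u).1 = j) →
      (w s).2 = false → (w t).2 = false ∧ (0 < k → (t : ℕ) < (s : ℕ)) := by
  intro k
  induction k with
  | zero =>
    intro s t h _ hs
    have hst : s = t := hw.2.1 s t (by omega)
    subst hst
    exact ⟨hs, by omega⟩
  | succ k ih =>
    intro s t h hcov hs
    obtain ⟨u, hu⟩ := hcov ((w s).1 + 1) (by omega) (by omega)
    have h4 := hw.2.2.2 s u (by omega)
    have hu2 : (w u).2 = false := by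
      rcases hb : (w u).2
      · rfl
      · exact absurd ⟨hs, hb⟩ h4.1
    have hus : (u : ℕ) < s := h4.2.2 hs hu2
    have hrec := ih u t (by omega) (fun j hj1 hj2 => hcov j (by omega) hj2) hu2
    refine ⟨hrec.1, fun _ => ?_⟩
    rcases Nat.eq_zero_or_pos k with hk | hk
    · have hut : u = t := hw.2.1 u t (by omega)
      exact hut ▸ hus
    · exact lt_trans (hrec.2 hk) hus

lemma chain_true (w : Fin m → ℕ × Bool) (hw : IsW m B i0 w) :
    ∀ k (s t : Fin m), (w t).1 = (w s).1 + k →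
      (∀ j, (w s).1 ≤ j → j ≤ (w t).1 → ∃ u, (w u).1 = j) →
      (w t).2 = true → (w s).2 = true ∧ (0 < k → (s : ℕ) < (t : ℕ)) := by
  intro k
  induction k with
  | zero =>
    intro s t h _ ht
    have hst : s = t := hw.2.1 s t (by omega)
    subst hst
    exact ⟨ht, by omega⟩
  | succ k ih =>
    intro s t h hcov ht
    obtain ⟨u, hu⟩ := hcov ((w s).1 + k) (by omega) (by omega)
    have h4 := hw.2.2.2 u t (by omega)
    have hu2 : (w u).2 = true := by
      rcases hb : (w u).2
      · exact absurd ⟨hb, ht⟩ h4.1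
      · rfl
    have hut : (u : ℕ) < t := h4.2.1 hu2 ht
    have hrec := ih s u (by omega) (fun j hj1 hj2 => hcov j hj1 (by omega)) hu2
    refine ⟨hrec.1, fun _ => ?_⟩
    rcases Nat.eq_zero_or_pos k with hk | hk
    · have hsu : s = u := hw.2.1 s u (by omega)
      exact hsu ▸ hut
    · exact lt_trans (hrec.2 hk) hut

lemma cover_lemma (w : Fin m → ℕ × Bool) (hw : IsW m B i0 w) (a b : ℕ)
    (hcard : b - a ≤ (Finset.univ.filter (fun u => a < (w u).1 ∧ (w u).1 ≤ b)).card) :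
    ∀ j, a < j → j ≤ b → ∃ u, (w u).1 = j := by
  intro j hj1 hj2
  have himg : Finset.image (fun u => (w u).1)
      (Finset.univ.filter (fun u => a < (w u).1 ∧ (w u).1 ≤ b)) = Finset.Icc (a + 1) b := by
    apply Finset.eq_of_subset_of_card_le
    · intro v hv
      simp only [Finset.mem_image, Finset.mem_filter, Finset.mem_univ, true_and] at hv
      obtain ⟨u, hu, rfl⟩ := hv
      simp only [Finset.mem_Icc]
      omega
    · rw [Finset.card_image_of_injOn (fun u _ v _ huv => hw.2.1 u v huv), Nat.card_Icc]
      omega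
  have hj : j ∈ Finset.Icc (a + 1) b := by simp only [Finset.mem_Icc]; omega
  rw [← himg] at hj
  simp only [Finset.mem_image, Finset.mem_filter, Finset.mem_univ, true_and] at hj
  obtain ⟨u, _, hu⟩ := hj
  exact ⟨u, hu⟩


end Wside

/-- Set of stones strictly below `s`. -/
def shiA (m : ℕ) (w : Fin m → ℕ × Bool) (s : Fin m) : Finset (Fin m) :=
  Finset.univ.filter (fun t => (w t).1 < (w s).1)

lemma mem_shiA {m : ℕ} {w : Fin m → ℕ × Bool} {s t : Fin m} :
    t ∈ shiA m w s ↔ (w t).1 < (w s).1 := by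
  simp [shiA]

lemma shiToD_eq (m : ℕ) (w : Fin m → ℕ × Bool) (s : Fin m) :
    shiToD m w s = ((w s).1 - 1 - (shiA m w s).card, (w s).2) := rfl

section Wside2
variable {m B : ℕ} {i0 : Fin m}

lemma wside (w : Fin m → ℕ × Bool) (hw : IsW m B i0 w) :
    IsD m B i0 (shiToD m w) ∧ shiToW m (shiToD m w) = w := by
  have hm : 0 < m := by have := i0.isLt; omega
  have hbd : ∀ s, 1 ≤ (w s).1 ∧ (w s).1 ≤ B + m := hw.1
  have hinj : ∀ s t, (w s).1 = (w t).1 → s = t := hw.2.1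
  have hpi0 : (w i0).1 = B + m := hw.2.2.1.1
  -- counting facts
  have h_r_le : ∀ s, (shiA m w s).card ≤ (w s).1 - 1 := by
    intro s
    have h1 : (shiA m w s).card ≤ (Finset.Icc 1 ((w s).1 - 1)).card := by
      apply Finset.card_le_card_of_injOn (fun t => (w t).1)
      · intro t ht
        rw [Finset.mem_coe, mem_shiA] at ht
        have h2 := hbd t
        exact Finset.mem_Icc.mpr ⟨h2.1, by beta_reduce; omega⟩
      · intro t _ u _ htu
        exact hinj t u htu
    rw [Nat.card_Icc] at h1
    omega
  have h_c_le : ∀ s, (Finset.univ.filter (fun t => (w s).1 < (w t).1)).card ≤ B + m - (w s).1 := by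
    intro s
    have h1 : (Finset.univ.filter (fun t => (w s).1 < (w t).1)).card
        ≤ (Finset.Icc ((w s).1 + 1) (B + m)).card := by
      apply Finset.card_le_card_of_injOn (fun t => (w t).1)
      · intro t ht
        simp only [Finset.mem_coe, Finset.mem_filter, Finset.mem_univ, true_and] at ht
        have h2 := hbd t
        exact Finset.mem_Icc.mpr ⟨by beta_reduce; omega, h2.2⟩
      · intro t _ u _ htu
        exact hinj t u htu
    rw [Nat.card_Icc] at h1
    omega
  have h_count : ∀ s, (shiA m w s).card
      + (Finset.univ.filter (fun t => (w s).1 < (w t).1)).card + 1 = m := by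
    intro s
    have hd1 : Disjoint (shiA m w s) (Finset.univ.filter (fun t => (w s).1 < (w t).1)) := by
      rw [Finset.disjoint_left]
      intro u hu1 hu2
      rw [mem_shiA] at hu1
      simp only [Finset.mem_filter, Finset.mem_univ, true_and] at hu2
      omega
    have hd2 : Disjoint (shiA m w s ∪ Finset.univ.filter (fun t => (w s).1 < (w t).1))
        ({s} : Finset (Fin m)) := by
      rw [Finset.disjoint_right]
      intro u hu1 hu2
      simp only [Finset.mem_singleton] at hu1
      subst hu1
      simp only [Finset.mem_union, mem_shiA, Finset.mem_filter, Finset.mem_univ, true_and] at hu2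
      omega
    have h3 : shiA m w s ∪ Finset.univ.filter (fun t => (w s).1 < (w t).1) ∪ {s}
        = Finset.univ := by
      ext u
      simp only [Finset.mem_union, mem_shiA, Finset.mem_filter, Finset.mem_univ, true_and,
        Finset.mem_singleton, iff_true]
      rcases lt_trichotomy ((w u).1) ((w s).1) with h | h | h
      · exact Or.inl (Or.inl h)
      · exact Or.inr (hinj u s h)
      · exact Or.inl (Or.inr h)
    have h4 := congrArg Finset.card h3
    rw [Finset.card_union_of_disjoint hd2, Finset.card_union_of_disjoint hd1,
      Finset.card_singleton, Finset.card_univ, Fintype.card_fin] at h4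
    exact h4
  have h_max : ∀ s, s ≠ i0 → (w s).1 < B + m := by
    intro s hs
    have h1 := hbd s
    rcases Nat.lt_or_ge ((w s).1) (B + m) with h | h
    · exact h
    · exact absurd (hinj s i0 (by omega)) hs
  have h_g_le : ∀ s, (w s).1 - 1 - (shiA m w s).card ≤ B := by
    intro s
    have := h_r_le s; have := h_c_le s; have := h_count s; have := hbd s
    omega
  have h_ri0 : (shiA m w i0).card = m - 1 := by
    have h1 : shiA m w i0 = Finset.univ.erase i0 := by
      ext u
      rw [mem_shiA]
      simp only [Finset.mem_erase, Finset.mem_univ, and_true]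
      constructor
      · rintro h rfl; omega
      · intro h; rw [hpi0]; exact h_max u h
    rw [h1, Finset.card_erase_of_mem (Finset.mem_univ _)]
    simp
  -- cover from saturated gap
  have h_cover_top : ∀ s, (w s).1 - 1 - (shiA m w s).card = B →
      (∀ j, (w s).1 ≤ j → j ≤ B + m → ∃ u, (w u).1 = j) := by
    intro s hgB j hj1 hj2
    rcases Nat.eq_or_lt_of_le hj1 with h | h
    · exact ⟨s, h⟩
    · refine cover_lemma w hw ((w s).1) (B + m) ?_ j h hj2
      have hCeq : Finset.univ.filter (fun u => (w s).1 < (w u).1 ∧ (w u).1 ≤ B + m)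
          = Finset.univ.filter (fun t => (w s).1 < (w t).1) := by
        ext u
        simp only [Finset.mem_filter, Finset.mem_univ, true_and]
        have := hbd u
        constructor
        · exact fun hh => hh.1
        · exact fun hh => ⟨hh, this.2⟩
      rw [hCeq]
      have := h_r_le s; have := h_count s; have := hbd s
      omega
  -- validity of the data
  have h_not : ∀ s : Fin m, (s : ℕ) < (i0 : ℕ) →
      ¬((w s).1 - 1 - (shiA m w s).card = B ∧ (w s).2 = false) := by
    rintro s hs ⟨hgB, hsign⟩
    have hcov := h_cover_top s hgB
    have hlt : (w s).1 < B + m := h_max s (fun h => by rw [h] at hs; omega)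
    have hbs := hbd s
    have := (chain_false w hw (B + m - (w s).1) s i0 (by omega)
      (fun j hj1 hj2 => hcov j hj1 (by omega)) hsign).2 (by omega)
    omega
  -- order agreement
  have h_agree : ∀ s t, (w t).1 < (w s).1 →
      shiKey m (shiToD m w) t < shiKey m (shiToD m w) s := by
    intro s t hts
    have hsplit : shiA m w s = shiA m w t
        ∪ Finset.univ.filter (fun u => (w t).1 ≤ (w u).1 ∧ (w u).1 < (w s).1) := by
      ext u
      simp only [Finset.mem_union, mem_shiA, Finset.mem_filter, Finset.mem_univ, true_and]
      omega
    have hdisj : Disjoint (shiA m w t)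
        (Finset.univ.filter (fun u => (w t).1 ≤ (w u).1 ∧ (w u).1 < (w s).1)) := by
      rw [Finset.disjoint_left]
      intro u hu1 hu2
      rw [mem_shiA] at hu1
      simp only [Finset.mem_filter, Finset.mem_univ, true_and] at hu2
      omega
    have hcards : (shiA m w s).card = (shiA m w t).card
        + (Finset.univ.filter (fun u => (w t).1 ≤ (w u).1 ∧ (w u).1 < (w s).1)).card := by
      rw [hsplit, Finset.card_union_of_disjoint hdisj]
    have hMle : (Finset.univ.filter (fun u => (w t).1 ≤ (w u).1 ∧ (w u).1 < (w s).1)).card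
        ≤ (w s).1 - (w t).1 := by
      have h1 : (Finset.univ.filter (fun u => (w t).1 ≤ (w u).1 ∧ (w u).1 < (w s).1)).card
          ≤ (Finset.Ico ((w t).1) ((w s).1)).card := by
        apply Finset.card_le_card_of_injOn (fun u => (w u).1)
        · intro u hu
          simp only [Finset.mem_coe, Finset.mem_filter, Finset.mem_univ, true_and] at hu
          exact Finset.mem_Ico.mpr hu
        · intro u _ v _ huv
          exact hinj u v huv
      rw [Nat.card_Ico] at h1
      exact h1
    have hgle : (w t).1 - 1 - (shiA m w t).card ≤ (w s).1 - 1 - (shiA m w s).card := by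
      have := h_r_le t; have := hbd t
      omega
    rcases Nat.eq_or_lt_of_le hgle with hgeq | hglt
    · -- same gap: interval is fully covered, use chain lemmas
      have hrt := h_r_le t; have hbt := hbd t; have hbs := hbd s
      have hMcard : (Finset.univ.filter (fun u => (w t).1 ≤ (w u).1 ∧ (w u).1 < (w s).1)).card
          = (w s).1 - (w t).1 := by
        omega
      have hcov : ∀ j, (w t).1 ≤ j → j ≤ (w s).1 → ∃ u, (w u).1 = j := by
        intro j hj1 hj2
        rcases Nat.eq_or_lt_of_le hj2 with h | h
        · exact ⟨s, h.symm⟩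
        · refine cover_lemma w hw ((w t).1 - 1) ((w s).1 - 1) ?_ j (by omega) (by omega)
          have hMeq : Finset.univ.filter
              (fun u => (w t).1 - 1 < (w u).1 ∧ (w u).1 ≤ (w s).1 - 1)
              = Finset.univ.filter (fun u => (w t).1 ≤ (w u).1 ∧ (w u).1 < (w s).1) := by
            ext u
            simp only [Finset.mem_filter, Finset.mem_univ, true_and]
            have := hbd u
            omega
          rw [hMeq, hMcard]
          omega
      have hchainf := chain_false w hw ((w s).1 - (w t).1) t s (by omega) hcov
      have hchaint := chain_true w hw ((w s).1 - (w t).1) t s (by omega) hcov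
      apply key_lt_of_offset_lt
      · rw [shiToD_eq, shiToD_eq]
        simp only
        omega
      · rw [shiToD_eq, shiToD_eq]
        simp only
        have hsv := s.isLt; have htv := t.isLt
        rcases hbs2 : (w s).2 <;> rcases hbt2 : (w t).2
        · -- both false
          have := (hchainf hbt2).2 (by omega)
          simp only [Bool.false_eq_true, if_false]
          omega
        · -- t true, s false
          simp only [Bool.false_eq_true, if_false, if_true]
          omega
        · -- t false, s true : impossible
          exact absurd (hchainf hbt2).1 (by rw [hbs2]; simp)
        · -- both true
          have := (hchaint hbs2).2 (by omega)
          simp only [if_true]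
          omega
    · apply key_lt_of_gap_lt
      rw [shiToD_eq, shiToD_eq]
      exact hglt
  -- assemble
  have hkey_iff : ∀ s t, shiKey m (shiToD m w) t < shiKey m (shiToD m w) s ↔ (w t).1 < (w s).1 := by
    intro s t
    constructor
    · intro h
      rcases lt_trichotomy ((w t).1) ((w s).1) with h1 | h1 | h1
      · exact h1
      · have h2 : t = s := hinj t s h1
        subst h2; omega
      · exact absurd (h_agree t s h1) (by omega)
    · exact h_agree s t
  have hrk : ∀ s, shiRk m (shiToD m w) s = (shiA m w s).card := by
    intro s
    unfold shiRk
    congr 1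
    ext t
    simp only [Finset.mem_filter, Finset.mem_univ, true_and, mem_shiA]
    exact hkey_iff s t
  constructor
  · refine ⟨?_, ?_, ?_⟩
    · intro s
      rw [shiToD_eq]
      exact h_g_le s
    · rw [shiToD_eq]
      refine Prod.ext ?_ hw.2.2.1.2
      simp only
      rw [h_ri0, hpi0]
      omega
    · intro s hs hc
      apply h_not s hs
      rw [shiToD_eq] at hc
      simp only [Prod.mk.injEq] at hc
      exact hc
  · funext s
    rw [show shiToW m (shiToD m w) s
        = ((shiToD m w s).1 + shiRk m (shiToD m w) s + 1, (shiToD m w s).2) from rfl,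
      hrk s, shiToD_eq]
    simp only
    have := h_r_le s; have := hbd s
    refine Prod.ext ?_ rfl
    simp only
    omega

end Wside2

section Count
variable {m B : ℕ}

/-- Per-coordinate choice sets for the data. -/
def shiA' (m B : ℕ) (i0 : Fin m) : Fin m → Finset (ℕ × Bool) := fun s =>
  if (s : ℕ) < (i0 : ℕ) then (Finset.range (B + 1) ×ˢ (Finset.univ : Finset Bool)).erase (B, false)
  else if s = i0 then {(B, false)}
  else Finset.range (B + 1) ×ˢ (Finset.univ : Finset Bool)

lemma isD_iff_mem (i0 : Fin m) (d : Fin m → ℕ × Bool) :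
    IsD m B i0 d ↔ ∀ s, d s ∈ shiA' m B i0 s := by
  constructor
  · rintro ⟨h1, h2, h3⟩ s
    unfold shiA'
    split_ifs with hc1 hc2
    · rw [Finset.mem_erase]
      refine ⟨h3 s hc1, ?_⟩
      rw [Finset.mem_product]
      exact ⟨Finset.mem_range.mpr (by have := h1 s; omega), Finset.mem_univ _⟩
    · subst hc2
      simp [h2]
    · rw [Finset.mem_product]
      exact ⟨Finset.mem_range.mpr (by have := h1 s; omega), Finset.mem_univ _⟩
  · intro h
    refine ⟨?_, ?_, ?_⟩
    · intro s
      have := h s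
      unfold shiA' at this
      split_ifs at this with hc1 hc2
      · rw [Finset.mem_erase, Finset.mem_product, Finset.mem_range] at this
        omega
      · simp at this
        rw [this]
      · rw [Finset.mem_product, Finset.mem_range] at this
        omega
    · have := h i0
      unfold shiA' at this
      simp at this
      exact this
    · intro s hs hc
      have := h s
      unfold shiA' at this
      rw [if_pos hs] at this
      rw [Finset.mem_erase] at this
      exact this.1 hc

lemma card_shiA' (i0 : Fin m) (s : Fin m) :
    (shiA' m B i0 s).card = if (s : ℕ) < (i0 : ℕ) then 2 * B + 1
      else if s = i0 then 1 else 2 * B + 2 := by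
  unfold shiA'
  split_ifs with hc1 hc2
  · rw [Finset.card_erase_of_mem
      (by rw [Finset.mem_product]; exact ⟨Finset.mem_range.mpr (by omega), Finset.mem_univ _⟩)]
    rw [Finset.card_product, Finset.card_range, Finset.card_univ, Fintype.card_bool]
    omega
  · simp
  · rw [Finset.card_product, Finset.card_range, Finset.card_univ, Fintype.card_bool]
    omega
end Count

section NcardW
variable {m B : ℕ}

lemma prod_card_shiA' (i0 : Fin m) :
    ∏ s : Fin m, (shiA' m B i0 s).card
      = (2 * B + 1) ^ (i0 : ℕ) * (2 * B + 2) ^ (m - 1 - (i0 : ℕ)) := by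
  have hsplit : (Finset.univ : Finset (Fin m)) = Finset.Iio i0 ∪ ({i0} ∪ Finset.Ioi i0) := by
    ext u
    simp only [Finset.mem_univ, Finset.mem_union, Finset.mem_Iio, Finset.mem_singleton,
      Finset.mem_Ioi, true_iff]
    rcases lt_trichotomy u i0 with h | h | h
    · exact Or.inl h
    · exact Or.inr (Or.inl h)
    · exact Or.inr (Or.inr h)
  have hd1 : Disjoint (Finset.Iio i0) ({i0} ∪ Finset.Ioi i0) := by
    rw [Finset.disjoint_left]
    intro u hu1 hu2
    simp only [Finset.mem_Iio] at hu1
    simp only [Finset.mem_union, Finset.mem_singleton, Finset.mem_Ioi] at hu2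
    rcases hu2 with h | h
    · subst h; exact absurd hu1 (lt_irrefl _)
    · exact absurd (lt_trans hu1 h) (lt_irrefl _)
  have hd2 : Disjoint ({i0} : Finset (Fin m)) (Finset.Ioi i0) := by
    rw [Finset.disjoint_left]
    intro u hu1 hu2
    simp only [Finset.mem_singleton] at hu1
    subst hu1
    simp only [Finset.mem_Ioi] at hu2
    exact absurd hu2 (lt_irrefl _)
  rw [hsplit, Finset.prod_union hd1, Finset.prod_union hd2, Finset.prod_singleton]
  have e1 : ∏ s ∈ Finset.Iio i0, (shiA' m B i0 s).card = (2 * B + 1) ^ (i0 : ℕ) := by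
    calc ∏ s ∈ Finset.Iio i0, (shiA' m B i0 s).card
        = ∏ _s ∈ Finset.Iio i0, (2 * B + 1) := by
          refine Finset.prod_congr rfl (fun s hs => ?_)
          rw [card_shiA', if_pos]
          have := Finset.mem_Iio.mp hs
          exact Fin.lt_def.mp this
      _ = (2 * B + 1) ^ (i0 : ℕ) := by rw [Finset.prod_const, Fin.card_Iio]
  have e2 : ∏ s ∈ Finset.Ioi i0, (shiA' m B i0 s).card = (2 * B + 2) ^ (m - 1 - (i0 : ℕ)) := by
    calc ∏ s ∈ Finset.Ioi i0, (shiA' m B i0 s).card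
        = ∏ _s ∈ Finset.Ioi i0, (2 * B + 2) := by
          refine Finset.prod_congr rfl (fun s hs => ?_)
          have h1 := Fin.lt_def.mp (Finset.mem_Ioi.mp hs)
          rw [card_shiA', if_neg (by omega), if_neg (by
            intro h; subst h; omega)]
      _ = (2 * B + 2) ^ (m - 1 - (i0 : ℕ)) := by rw [Finset.prod_const, Fin.card_Ioi]
  have e3 : (shiA' m B i0 i0).card = 1 := by
    rw [card_shiA', if_neg (lt_irrefl _), if_pos rfl]
  rw [e1, e2, e3]
  ring

lemma ncard_W (i0 : Fin m) :
    {w : Fin m → ℕ × Bool | IsW m B i0 w}.ncard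
      = (2 * B + 1) ^ (i0 : ℕ) * (2 * B + 2) ^ (m - 1 - (i0 : ℕ)) := by
  have himg : {w : Fin m → ℕ × Bool | IsW m B i0 w}
      = shiToW m '' {d : Fin m → ℕ × Bool | IsD m B i0 d} := by
    ext w
    simp only [Set.mem_setOf_eq, Set.mem_image]
    constructor
    · intro hw
      exact ⟨shiToD m w, (wside w hw).1, (wside w hw).2⟩
    · rintro ⟨d, hd, rfl⟩
      exact toW_isW d hd
  have hinj : Set.InjOn (shiToW m) {d : Fin m → ℕ × Bool | IsD m B i0 d} := by
    intro d hd d' hd' h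
    have h1 : shiToD m (shiToW m d) = shiToD m (shiToW m d') := by rw [h]
    rwa [toD_toW d, toD_toW d'] at h1
  rw [himg, Set.ncard_image_of_injOn hinj]
  have hDset : {d : Fin m → ℕ × Bool | IsD m B i0 d} = ↑(Fintype.piFinset (shiA' m B i0)) := by
    ext d
    simp only [Set.mem_setOf_eq, Finset.coe_sort_coe, Finset.mem_coe, Fintype.mem_piFinset]
    exact isD_iff_mem i0 d
  rw [hDset, Set.ncard_coe_finset, Fintype.card_piFinset, prod_card_shiA']

end NcardW

section ZModSide

lemma zmod_zero_iff (q : ℕ) (u : ℤ) (h1 : -(q : ℤ) < u) (h2 : u < q) :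
    ((u : ZMod q) = 0) ↔ u = 0 := by
  constructor
  · intro h
    have hdvd := (ZMod.intCast_zmod_eq_zero_iff_dvd u q).mp h
    exact Int.eq_zero_of_abs_lt_dvd hdvd (by rw [abs_lt]; exact ⟨h1, h2⟩)
  · rintro rfl
    simp

/-- Map a word to a point of `(ZMod q)^m`, `q = 2(B+m)+1`. -/
def shiF (m B : ℕ) (w : Fin m → ℕ × Bool) : Fin m → ZMod (2 * (B + m) + 1) :=
  fun s => if (w s).2 then ((w s).1 : ZMod (2 * (B + m) + 1))
           else -((w s).1 : ZMod (2 * (B + m) + 1))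

/-- The solution set. -/
def MSet (m B : ℕ) (i0 : Fin m) : Set (Fin m → ZMod (2 * (B + m) + 1)) :=
  {x | 2 * x i0 = 1 ∧
       (∀ s, s ≠ i0 → 2 * x s ≠ 0 ∧ 2 * x s ≠ 1) ∧
       (∀ s t, s ≠ t → x s ≠ x t) ∧
       (∀ s t, s < t → x s ≠ x t + 1) ∧
       (∀ s t, s ≠ t → x s ≠ -x t ∧ x s ≠ -x t + 1)}

variable {m B : ℕ} {i0 : Fin m}

lemma qcast_zero : ((2 * (B + m) + 1 : ℕ) : ZMod (2 * (B + m) + 1)) = 0 :=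
  ZMod.natCast_self _

lemma F_mem (w : Fin m → ℕ × Bool) (hw : IsW m B i0 w) : shiF m B w ∈ MSet m B i0 := by
  set q : ℕ := 2 * (B + m) + 1 with hq
  have hbd : ∀ s, 1 ≤ (w s).1 ∧ (w s).1 ≤ B + m := hw.1
  have hinj : ∀ s t, (w s).1 = (w t).1 → s = t := hw.2.1
  have hpi0 : (w i0).1 = B + m := hw.2.2.1.1
  have hsi0 : (w i0).2 = false := hw.2.2.1.2
  have hW4 := hw.2.2.2
  have hmaxeq : ∀ u, (w u).1 = B + m → u = i0 := fun u h => hinj u i0 (h.trans hpi0.symm)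
  have hzq : ((q : ℕ) : ZMod q) = 0 := ZMod.natCast_self q
  have hzqZ : (2 : ZMod q) * (B : ZMod q) + 2 * (m : ZMod q) + 1 = 0 := by
    have h1 : ((2 * (B + m) + 1 : ℕ) : ZMod q) = 0 := by rw [← hq]; exact hzq
    push_cast at h1
    linear_combination h1
  refine ⟨?_, ?_, ?_, ?_, ?_⟩
  · -- 2 * x i0 = 1
    show 2 * (if (w i0).2 then _ else _) = 1
    rw [hsi0, if_neg (by simp), hpi0]
    push_cast
    linear_combination -hzqZ
  · -- 2 x s ≠ 0, 1
    intro s hs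
    have hb := hbd s
    have hlt : (w s).1 < B + m := by
      rcases Nat.lt_or_ge ((w s).1) (B + m) with h | h
      · exact h
      · exact absurd (hmaxeq s (by omega)) hs
    constructor
    · intro h
      show False
      rcases hb2 : (w s).2 <;> rw [show shiF m B w s = if (w s).2 then ((w s).1 : ZMod q)
          else -((w s).1 : ZMod q) from rfl, hb2] at h <;> simp only [Bool.false_eq_true,
          if_false, if_true] at h
      · have h0 : (((-2 : ℤ) * (w s).1 : ℤ) : ZMod q) = 0 := by push_cast; linear_combination h
        rw [zmod_zero_iff q _ (by omega) (by omega)] at h0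
        omega
      · have h0 : (((2 : ℤ) * (w s).1 : ℤ) : ZMod q) = 0 := by push_cast; linear_combination h
        rw [zmod_zero_iff q _ (by omega) (by omega)] at h0
        omega
    · intro h
      show False
      rcases hb2 : (w s).2 <;> rw [show shiF m B w s = if (w s).2 then ((w s).1 : ZMod q)
          else -((w s).1 : ZMod q) from rfl, hb2] at h <;> simp only [Bool.false_eq_true,
          if_false, if_true] at h
      · have h0 : (((-2 : ℤ) * (w s).1 - 1 : ℤ) : ZMod q) = 0 := by
          push_cast; linear_combination h
        rw [zmod_zero_iff q _ (by omega) (by omega)] at h0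
        omega
      · have h0 : (((2 : ℤ) * (w s).1 - 1 : ℤ) : ZMod q) = 0 := by
          push_cast; linear_combination h
        rw [zmod_zero_iff q _ (by omega) (by omega)] at h0
        omega
  · -- injectivity
    intro s t hst h
    have hbs := hbd s; have hbt := hbd t
    rcases hb2 : (w s).2 <;> rcases hb3 : (w t).2 <;>
      rw [show shiF m B w s = if (w s).2 then ((w s).1 : ZMod q)
          else -((w s).1 : ZMod q) from rfl,
        show shiF m B w t = if (w t).2 then ((w t).1 : ZMod q)
          else -((w t).1 : ZMod q) from rfl, hb2, hb3] at h <;>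
      simp only [Bool.false_eq_true, if_false, if_true] at h
    · -- (false, false): -as = -at
      have h0 : ((((w s).1 : ℤ) - (w t).1 : ℤ) : ZMod q) = 0 := by
        push_cast; linear_combination -h
      rw [zmod_zero_iff q _ (by omega) (by omega)] at h0
      exact hst (hinj s t (by omega))
    · -- (false, true): -as = at
      have h0 : ((((w s).1 : ℤ) + (w t).1 : ℤ) : ZMod q) = 0 := by
        push_cast; linear_combination -h
      rw [zmod_zero_iff q _ (by omega) (by omega)] at h0
      omega
    · -- (true, false): as = -at
      have h0 : ((((w s).1 : ℤ) + (w t).1 : ℤ) : ZMod q) = 0 := by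
        push_cast; linear_combination h
      rw [zmod_zero_iff q _ (by omega) (by omega)] at h0
      omega
    · -- (true, true): as = at
      have h0 : ((((w s).1 : ℤ) - (w t).1 : ℤ) : ZMod q) = 0 := by
        push_cast; linear_combination h
      rw [zmod_zero_iff q _ (by omega) (by omega)] at h0
      exact hst (hinj s t (by omega))
  · -- Shi condition x s ≠ x t + 1 for s < t
    intro s t hst h
    have hstn : (s : ℕ) < (t : ℕ) := hst
    have hne : s ≠ t := Fin.ne_of_lt hst
    have hbs := hbd s; have hbt := hbd t
    rcases hb2 : (w s).2 <;> rcases hb3 : (w t).2 <;>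
      rw [show shiF m B w s = if (w s).2 then ((w s).1 : ZMod q)
          else -((w s).1 : ZMod q) from rfl,
        show shiF m B w t = if (w t).2 then ((w t).1 : ZMod q)
          else -((w t).1 : ZMod q) from rfl, hb2, hb3] at h <;>
      simp only [Bool.false_eq_true, if_false, if_true] at h
    · -- (false, false): -as = -at + 1, so at = as + 1
      have h0 : ((-((w s).1 : ℤ) + (w t).1 - 1 : ℤ) : ZMod q) = 0 := by
        push_cast; linear_combination h
      rw [zmod_zero_iff q _ (by omega) (by omega)] at h0
      have := (hW4 s t (by omega)).2.2 hb2 hb3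
      omega
    · -- (false, true): -as = at + 1 forces as + at + 1 = q
      have h0 : ((-((w s).1 : ℤ) - (w t).1 - 1 + (2 * (B + m) + 1) : ℤ) : ZMod q) = 0 := by
        push_cast; linear_combination h + hzqZ
      rw [zmod_zero_iff q _ (by omega) (by omega)] at h0
      have h1 : s = i0 := hmaxeq s (by omega)
      have h2 : t = i0 := hmaxeq t (by omega)
      exact hne (h1.trans h2.symm)
    · -- (true, false): as = -at + 1, so as + at = 1, impossible
      have h0 : ((((w s).1 : ℤ) + (w t).1 - 1 : ℤ) : ZMod q) = 0 := by
        push_cast; linear_combination h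
      rw [zmod_zero_iff q _ (by omega) (by omega)] at h0
      omega
    · -- (true, true): as = at + 1
      have h0 : ((((w s).1 : ℤ) - (w t).1 - 1 : ℤ) : ZMod q) = 0 := by
        push_cast; linear_combination h
      rw [zmod_zero_iff q _ (by omega) (by omega)] at h0
      have := (hW4 t s (by omega)).2.1 hb3 hb2
      omega
  · -- type C conditions
    intro s t hst
    have hbs := hbd s; have hbt := hbd t
    constructor
    · intro h
      rcases hb2 : (w s).2 <;> rcases hb3 : (w t).2 <;>
        rw [show shiF m B w s = if (w s).2 then ((w s).1 : ZMod q)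
            else -((w s).1 : ZMod q) from rfl,
          show shiF m B w t = if (w t).2 then ((w t).1 : ZMod q)
            else -((w t).1 : ZMod q) from rfl, hb2, hb3] at h <;>
        simp only [Bool.false_eq_true, if_false, if_true] at h
      · -- (false, false): -as = at
        have h0 : ((((w s).1 : ℤ) + (w t).1 : ℤ) : ZMod q) = 0 := by
          push_cast; linear_combination -h
        rw [zmod_zero_iff q _ (by omega) (by omega)] at h0
        omega
      · -- (false, true): -as = -at
        have h0 : ((((w s).1 : ℤ) - (w t).1 : ℤ) : ZMod q) = 0 := by
          push_cast; linear_combination -h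
        rw [zmod_zero_iff q _ (by omega) (by omega)] at h0
        exact hst (hinj s t (by omega))
      · -- (true, false): as = at
        have h0 : ((((w s).1 : ℤ) - (w t).1 : ℤ) : ZMod q) = 0 := by
          push_cast; linear_combination h
        rw [zmod_zero_iff q _ (by omega) (by omega)] at h0
        exact hst (hinj s t (by omega))
      · -- (true, true): as = -at
        have h0 : ((((w s).1 : ℤ) + (w t).1 : ℤ) : ZMod q) = 0 := by
          push_cast; linear_combination h
        rw [zmod_zero_iff q _ (by omega) (by omega)] at h0
        omega
    · intro h
      rcases hb2 : (w s).2 <;> rcases hb3 : (w t).2 <;>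
        rw [show shiF m B w s = if (w s).2 then ((w s).1 : ZMod q)
            else -((w s).1 : ZMod q) from rfl,
          show shiF m B w t = if (w t).2 then ((w t).1 : ZMod q)
            else -((w t).1 : ZMod q) from rfl, hb2, hb3] at h <;>
        simp only [Bool.false_eq_true, if_false, if_true] at h
      · -- (false, false): -as = at + 1, forces as + at + 1 = q, both = B+m
        have h0 : ((-((w s).1 : ℤ) - (w t).1 - 1 + (2 * (B + m) + 1) : ℤ) : ZMod q) = 0 := by
          push_cast; linear_combination h + hzqZ
        rw [zmod_zero_iff q _ (by omega) (by omega)] at h0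
        have h1 : s = i0 := hmaxeq s (by omega)
        have h2 : t = i0 := hmaxeq t (by omega)
        exact hst (h1.trans h2.symm)
      · -- (false, true): -as = -at + 1, so at = as + 1, forbidden sign pattern
        have h0 : ((-((w s).1 : ℤ) + (w t).1 - 1 : ℤ) : ZMod q) = 0 := by
          push_cast; linear_combination h
        rw [zmod_zero_iff q _ (by omega) (by omega)] at h0
        exact (hW4 s t (by omega)).1 ⟨hb2, hb3⟩
      · -- (true, false): as = at + 1, forbidden sign pattern
        have h0 : ((((w s).1 : ℤ) - (w t).1 - 1 : ℤ) : ZMod q) = 0 := by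
          push_cast; linear_combination h
        rw [zmod_zero_iff q _ (by omega) (by omega)] at h0
        exact (hW4 t s (by omega)).1 ⟨hb3, hb2⟩
      · -- (true, true): as = -at + 1, so as + at = 1, impossible
        have h0 : ((((w s).1 : ℤ) + (w t).1 - 1 : ℤ) : ZMod q) = 0 := by
          push_cast; linear_combination h
        rw [zmod_zero_iff q _ (by omega) (by omega)] at h0
        omega

lemma F_injOn : Set.InjOn (shiF m B) {w : Fin m → ℕ × Bool | IsW m B i0 w} := by
  set q : ℕ := 2 * (B + m) + 1 with hq
  intro w hw w' hw' h
  simp only [Set.mem_setOf_eq] at hw hw'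
  have hbd : ∀ s, 1 ≤ (w s).1 ∧ (w s).1 ≤ B + m := hw.1
  have hbd' : ∀ s, 1 ≤ (w' s).1 ∧ (w' s).1 ≤ B + m := hw'.1
  funext s
  have hs := congrFun h s
  have hbs := hbd s; have hbs' := hbd' s
  rcases hb2 : (w s).2 <;> rcases hb3 : (w' s).2 <;>
    rw [show shiF m B w s = if (w s).2 then ((w s).1 : ZMod q)
        else -((w s).1 : ZMod q) from rfl,
      show shiF m B w' s = if (w' s).2 then ((w' s).1 : ZMod q)
        else -((w' s).1 : ZMod q) from rfl, hb2, hb3] at hs <;>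
    simp only [Bool.false_eq_true, if_false, if_true] at hs
  · have h0 : ((((w s).1 : ℤ) - (w' s).1 : ℤ) : ZMod q) = 0 := by
      push_cast; linear_combination -hs
    rw [zmod_zero_iff q _ (by omega) (by omega)] at h0
    exact Prod.ext (by omega) (hb2.trans hb3.symm)
  · have h0 : ((((w s).1 : ℤ) + (w' s).1 : ℤ) : ZMod q) = 0 := by
      push_cast; linear_combination -hs
    rw [zmod_zero_iff q _ (by omega) (by omega)] at h0
    omega
  · have h0 : ((((w s).1 : ℤ) + (w' s).1 : ℤ) : ZMod q) = 0 := by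
      push_cast; linear_combination hs
    rw [zmod_zero_iff q _ (by omega) (by omega)] at h0
    omega
  · have h0 : ((((w s).1 : ℤ) - (w' s).1 : ℤ) : ZMod q) = 0 := by
      push_cast; linear_combination hs
    rw [zmod_zero_iff q _ (by omega) (by omega)] at h0
    exact Prod.ext (by omega) (hb2.trans hb3.symm)

lemma F_surj (x : Fin m → ZMod (2 * (B + m) + 1)) (hx : x ∈ MSet m B i0) :
    ∃ w, IsW m B i0 w ∧ shiF m B w = x := by
  haveI : NeZero (2 * (B + m) + 1) := ⟨by omega⟩
  obtain ⟨hc1, hc2, hc3, hc4, hc5⟩ := hx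
  have hvlt : ∀ s, (x s).val < 2 * (B + m) + 1 := fun s => ZMod.val_lt (x s)
  have hvx : ∀ s, (((x s).val : ℕ) : ZMod (2 * (B + m) + 1)) = x s :=
    fun s => ZMod.natCast_rightInverse (x s)
  have hm : 0 < m := by have := i0.isLt; omega
  have hzq : ((2 * (B + m) + 1 : ℕ) : ZMod (2 * (B + m) + 1)) = 0 := ZMod.natCast_self _
  have hzqZ : (2 : ZMod (2 * (B + m) + 1)) * (B : ZMod (2 * (B + m) + 1)) + 2 * m + 1 = 0 := by
    have h1 := hzq
    push_cast at h1
    linear_combination h1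
  -- values are nonzero
  have hv0 : ∀ s, (x s).val ≠ 0 := by
    intro s h0
    have hx0 : x s = 0 := by rw [← hvx s, h0]; simp
    by_cases hsi : s = i0
    · subst hsi
      rw [hx0, mul_zero] at hc1
      have h1 : ((1 : ℤ) : ZMod (2 * (B + m) + 1)) = 0 := by push_cast; linear_combination -hc1
      rw [zmod_zero_iff _ _ (by omega) (by omega)] at h1
      omega
    · exact (hc2 s hsi).1 (by rw [hx0, mul_zero])
  -- derived ZMod facts from val equations
  have hadd1 : ∀ s t : Fin m, (x t).val = (x s).val + 1 → x t = x s + 1 := by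
    intro s t h
    rw [← hvx t, ← hvx s, h]
    push_cast
    ring
  have hsum0 : ∀ s t : Fin m, (x s).val + (x t).val = 2 * (B + m) + 1 → x s = -x t := by
    intro s t h
    have h1 : (((x s).val + (x t).val : ℕ) : ZMod (2 * (B + m) + 1)) = 0 := by rw [h]; exact hzq
    push_cast at h1
    rw [← hvx s, ← hvx t]
    linear_combination h1
  have hsum1 : ∀ s t : Fin m, (x s).val + (x t).val = 2 * (B + m) + 1 + 1 → x s = -x t + 1 := by
    intro s t h
    have h1 : (((x s).val + (x t).val : ℕ) : ZMod (2 * (B + m) + 1)) = 1 := by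
      rw [h]
      push_cast
      linear_combination hzqZ
    push_cast at h1
    rw [← hvx s, ← hvx t]
    linear_combination h1
  -- value of x i0
  have hvi0 : (x i0).val = B + m + 1 := by
    have h1 : ((2 * ((x i0).val : ℤ) - 1 - (2 * (B + m) + 1) : ℤ)
        : ZMod (2 * (B + m) + 1)) = 0 := by
      push_cast
      rw [hvx i0]
      linear_combination hc1 - hzqZ
    rw [zmod_zero_iff _ _ (by have := hvlt i0; have := hv0 i0; omega)
      (by have := hvlt i0; omega)] at h1
    omega
  -- the word
  set w : Fin m → ℕ × Bool := fun s => if (x s).val ≤ B + m then ((x s).val, true)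
    else (2 * (B + m) + 1 - (x s).val, false) with hwdef
  have hwc : ∀ s, ((x s).val ≤ B + m ∧ w s = ((x s).val, true)) ∨
      (B + m < (x s).val ∧ w s = (2 * (B + m) + 1 - (x s).val, false)) := by
    intro s
    by_cases hcs : (x s).val ≤ B + m
    · exact Or.inl ⟨hcs, by simp only [hwdef]; rw [if_pos hcs]⟩
    · exact Or.inr ⟨by omega, by simp only [hwdef]; rw [if_neg hcs]⟩
  refine ⟨w, ⟨?_, ?_, ?_, ?_⟩, ?_⟩
  · -- bounds
    intro s
    have h1 := hvlt s; have h2 := hv0 s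
    rcases hwc s with ⟨hcs, hws⟩ | ⟨hcs, hws⟩ <;> rw [hws] <;> constructor <;> simp only <;> omega
  · -- injectivity of positions
    intro s t h
    by_contra hne
    have h1 := hvlt s; have h2 := hvlt t
    rcases hwc s with ⟨hcs, hws⟩ | ⟨hcs, hws⟩ <;> rcases hwc t with ⟨hct, hwt⟩ | ⟨hct, hwt⟩ <;>
      rw [hws, hwt] at h <;> simp only at h
    · exact hc3 s t hne (by rw [← hvx s, ← hvx t, h])
    · exact (hc5 s t hne).1 (hsum0 s t (by omega))
    · exact (hc5 s t hne).1 (by rw [hsum0 t s (by omega)]; ring)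
    · exact hc3 s t hne (by rw [← hvx s, ← hvx t]; congr 1; omega)
  · -- the special coordinate
    rcases hwc i0 with ⟨hcs, hws⟩ | ⟨hcs, hws⟩
    · omega
    · rw [hws]
      constructor
      · simp only
        omega
      · rfl
  · -- adjacency conditions
    intro s t h
    have hvs := hvlt s; have hvt := hvlt t
    have hne : s ≠ t := by
      intro hh
      subst hh
      omega
    refine ⟨?_, ?_, ?_⟩
    · rintro ⟨h1, h2⟩
      rcases hwc s with ⟨hcs, hws⟩ | ⟨hcs, hws⟩
      · rw [hws] at h1
        simp at h1
      · rcases hwc t with ⟨hct, hwt⟩ | ⟨hct, hwt⟩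
        · rw [hws, hwt] at h
          simp only at h
          exact (hc5 t s hne.symm).2 (hsum1 t s (by omega))
        · rw [hwt] at h2
          simp at h2
    · intro h1 h2
      rcases hwc s with ⟨hcs, hws⟩ | ⟨hcs, hws⟩
      · rcases hwc t with ⟨hct, hwt⟩ | ⟨hct, hwt⟩
        · rw [hws, hwt] at h
          simp only at h
          have hxt : x t = x s + 1 := hadd1 s t (by omega)
          rcases Nat.lt_trichotomy (s : ℕ) (t : ℕ) with hlt | heq | hgt
          · exact hlt
          · exact absurd (Fin.ext heq) hne
          · exact absurd hxt (hc4 t s hgt)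
        · rw [hwt] at h2
          simp at h2
      · rw [hws] at h1
        simp at h1
    · intro h1 h2
      rcases hwc s with ⟨hcs, hws⟩ | ⟨hcs, hws⟩
      · rw [hws] at h1
        simp at h1
      · rcases hwc t with ⟨hct, hwt⟩ | ⟨hct, hwt⟩
        · rw [hwt] at h2
          simp at h2
        · rw [hws, hwt] at h
          simp only at h
          have hxs : x s = x t + 1 := hadd1 t s (by omega)
          rcases Nat.lt_trichotomy (t : ℕ) (s : ℕ) with hlt | heq | hgt
          · exact hlt
          · exact absurd (Fin.ext heq) hne.symm
          · exact absurd hxs (hc4 s t hgt)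
  · -- shiF gives back x
    funext s
    rcases hwc s with ⟨hcs, hws⟩ | ⟨hcs, hws⟩
    · rw [show shiF m B w s = if (w s).2 then ((w s).1 : ZMod (2 * (B + m) + 1))
          else -((w s).1 : ZMod (2 * (B + m) + 1)) from rfl, hws]
      simp only [if_true]
      exact hvx s
    · rw [show shiF m B w s = if (w s).2 then ((w s).1 : ZMod (2 * (B + m) + 1))
          else -((w s).1 : ZMod (2 * (B + m) + 1)) from rfl, hws]
      simp only [Bool.false_eq_true, if_false]
      rw [Nat.cast_sub (le_of_lt (hvlt s)), hvx s, hzq]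
      ring

lemma ncard_MSet : (MSet m B i0).ncard
    = (2 * B + 1) ^ (i0 : ℕ) * (2 * B + 2) ^ (m - 1 - (i0 : ℕ)) := by
  have h1 : MSet m B i0 = shiF m B '' {w | IsW m B i0 w} := by
    ext x
    constructor
    · intro hx
      obtain ⟨w, hw, he⟩ := F_surj x hx
      exact ⟨w, hw, he⟩
    · rintro ⟨w, hw, rfl⟩
      exact F_mem w hw
  rw [h1, Set.ncard_image_of_injOn F_injOn, ncard_W i0]

end ZModSide

/-- The characteristic quasi-polynomial of the restriction of the Shi arrangement
of type C to the hyperplane `2 x_i = 1` (indices `1 ≤ i ≤ m`, 1-indexed). -/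
theorem shi_typeC_restriction_two_xi_eq_one (m i : ℕ) (hm : 1 ≤ m)
    (hi1 : 1 ≤ i) (him : i ≤ m) :
    ∃ N : ℕ, 0 < N ∧ ∀ q : ℕ, N ≤ q →
      (Odd q →
        ({x : Fin m → ZMod q |
            2 * x ⟨i - 1, by omega⟩ = 1 ∧
            (∀ s : Fin m, s ≠ ⟨i - 1, by omega⟩ → 2 * x s ≠ 0 ∧ 2 * x s ≠ 1) ∧
            (∀ s t : Fin m, s ≠ t → x s ≠ x t) ∧
            (∀ s t : Fin m, s < t → x s ≠ x t + 1) ∧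
            (∀ s t : Fin m, s ≠ t → x s ≠ -x t ∧ x s ≠ -x t + 1)}.ncard : ℤ)
          = ((q : ℤ) - 2 * m) ^ (i - 1) * ((q : ℤ) - 2 * m + 1) ^ (m - i)) ∧
      (Even q →
        ({x : Fin m → ZMod q |
            2 * x ⟨i - 1, by omega⟩ = 1 ∧
            (∀ s : Fin m, s ≠ ⟨i - 1, by omega⟩ → 2 * x s ≠ 0 ∧ 2 * x s ≠ 1) ∧
            (∀ s t : Fin m, s ≠ t → x s ≠ x t) ∧
            (∀ s t : Fin m, s < t → x s ≠ x t + 1) ∧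
            (∀ s t : Fin m, s ≠ t → x s ≠ -x t ∧ x s ≠ -x t + 1)}.ncard : ℤ)
          = 0) := by
  refine ⟨2 * m + 2, by omega, ?_⟩
  intro q hq
  constructor
  · -- odd case
    intro hodd
    obtain ⟨k, hk⟩ := hodd
    have hB : ∃ B : ℕ, q = 2 * (B + m) + 1 := ⟨k - m, by omega⟩
    obtain ⟨B, rfl⟩ := hB
    rw [show {x : Fin m → ZMod (2 * (B + m) + 1) |
            2 * x ⟨i - 1, by omega⟩ = 1 ∧
            (∀ s : Fin m, s ≠ ⟨i - 1, by omega⟩ → 2 * x s ≠ 0 ∧ 2 * x s ≠ 1) ∧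
            (∀ s t : Fin m, s ≠ t → x s ≠ x t) ∧
            (∀ s t : Fin m, s < t → x s ≠ x t + 1) ∧
            (∀ s t : Fin m, s ≠ t → x s ≠ -x t ∧ x s ≠ -x t + 1)}
        = MSet m B ⟨i - 1, by omega⟩ from rfl]
    rw [ncard_MSet]
    have he1 : ((⟨i - 1, by omega⟩ : Fin m) : ℕ) = i - 1 := rfl
    rw [he1, show m - 1 - (i - 1) = m - i from by omega]
    push_cast
    ring
  · -- even case
    intro heven
    obtain ⟨k, hk⟩ := heven
    have hempty : {x : Fin m → ZMod q |
            2 * x ⟨i - 1, by omega⟩ = 1 ∧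
            (∀ s : Fin m, s ≠ ⟨i - 1, by omega⟩ → 2 * x s ≠ 0 ∧ 2 * x s ≠ 1) ∧
            (∀ s t : Fin m, s ≠ t → x s ≠ x t) ∧
            (∀ s t : Fin m, s < t → x s ≠ x t + 1) ∧
            (∀ s t : Fin m, s ≠ t → x s ≠ -x t ∧ x s ≠ -x t + 1)} = ∅ := by
      ext x
      simp only [Set.mem_setOf_eq, Set.mem_empty_iff_false, iff_false]
      rintro ⟨h1, -⟩
      have h2 : (2 : ℕ) ∣ q := ⟨k, by omega⟩
      have h3 := congrArg (ZMod.castHom h2 (ZMod 2)) h1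
      rw [map_mul, map_ofNat, map_one] at h3
      rw [show ((2 : ZMod 2)) = 0 from by decide, zero_mul] at h3
      exact absurd h3 (by decide)
    rw [hempty]
    simp
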